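/- Let (b,θ,0,m) be a magnetic graph over X with potential q = 0 and let W ⊆ X be finite and nonempty. Then there exists a function f : W → ℂ with Σ_{x∈W} |f(x)|² m(x) = 1 such that (1/2) Σ_{x,y∈W} b(x,y)|f(x) − e^{iθ(x,y)} f(y)|² ≤ ι_{2,θ}(W)/m(W), where m(W) = Σ_{x∈W} m(x); consequently the bottom of the spectrum of the magnetic Laplacian H_{θ,W} satisfies 0 ≤ min σ(H_{θ,W}) ≤ ι_{2,θ}(W)/m(W) ≤ 2 ι_{1,θ}(W)/m(W). -/

import Mathlib

open Complex MeasureTheory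
open scoped Classical

noncomputable section

variable {X : Type*}

/-- The structural hypotheses of a magnetic graph `(b, θ, q, m)` over `X`:
`b` is nonnegative, symmetric, has zero diagonal and summable rows; the
magnetic potential `θ` is antisymmetric modulo `2π`; the measure `m` is positive. -/
def IsMagneticGraph (b θ : X → X → ℝ) (m : X → ℝ) : Prop :=
  (∀ x y, 0 ≤ b x y) ∧ (∀ x y, b x y = b y x) ∧ (∀ x, b x x = 0) ∧
  (∀ x, Summable fun y => b x y) ∧
  (∀ x y, ∃ k : ℤ, θ x y + θ y x = 2 * Real.pi * k) ∧
  (∀ x, 0 < m x)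

/-- The `p`-frustration index `ι_{p,θ}(W)` of a finite set `W`. -/
def frust (b θ : X → X → ℝ) (p : ℝ) (W : Finset X) : ℝ :=
  sInf {r : ℝ | ∃ τ : X → ℂ, (∀ x ∈ W, ‖τ x‖ = 1) ∧
    r = (1 / 2) * ∑ x ∈ W, ∑ y ∈ W,
      b x y * ‖τ x - Complex.exp ((θ x y : ℂ) * Complex.I) * τ y‖ ^ p}

/-- The measure `b(∂W)` of the boundary `∂W = (W×(X∖W)) ∪ ((X∖W)×W)`. -/
def bBoundary (b : X → X → ℝ) (W : Finset X) : ℝ :=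
  (∑ x ∈ W, ∑' y : {y : X // y ∉ W}, b x ↑y) +
  (∑ y ∈ W, ∑' x : {x : X // x ∉ W}, b ↑x y)

/-- `(a,k)_p`-magnetic-sparseness. -/
def MagSparse (b θ : X → X → ℝ) (q m : X → ℝ) (p a k : ℝ) : Prop :=
  ∀ W : Finset X,
    (∑ x ∈ W, ∑ y ∈ W, b x y) ≤
      (1 + a) * frust b θ p W +
      a * ((1 / 2) * bBoundary b W + ∑ x ∈ W, max (q x) 0 * m x) +
      k * ∑ x ∈ W, m x

/-- The energy functional `Q_{p,θ}` on finitely supported functions. -/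
def Qform (b θ : X → X → ℝ) (q m : X → ℝ) (p : ℝ) (f : X → ℂ) : ℝ :=
  (1 / 2) * ∑' x, ∑' y, b x y * ‖f x - Complex.exp ((θ x y : ℂ) * Complex.I) * f y‖ ^ p +
  ∑' x, q x * ‖f x‖ ^ p * m x

/-- The weighted vertex degree `Deg(x) = (1/m(x)) Σ_y b(x,y) + q(x)`. -/
def Degf (b : X → X → ℝ) (q m : X → ℝ) (x : X) : ℝ :=
  (1 / m x) * ∑' y, b x y + q x

/-- The pairing `⟨Deg, |f|^p⟩ = Σ_x Deg(x) |f(x)|^p m(x)`. -/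
def degPair (b : X → X → ℝ) (q m : X → ℝ) (p : ℝ) (f : X → ℂ) : ℝ :=
  ∑' x, Degf b q m x * ‖f x‖ ^ p * m x

/-- The `p`-norm to the `p`: `‖f‖_p^p = Σ_x |f(x)|^p m(x)`. -/
def pNorm (m : X → ℝ) (p : ℝ) (f : X → ℂ) : ℝ :=
  ∑' x, ‖f x‖ ^ p * m x

/-- `q ∈ K_α^{p,θ}` with constant `C`: the negative part of `q` is form bounded. -/
def InKClass (b θ : X → X → ℝ) (q m : X → ℝ) (p α C : ℝ) : Prop :=
  ∀ f : X → ℂ, (Function.support f).Finite →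
    (∑' x, max (-q x) 0 * ‖f x‖ ^ p * m x) ≤
      α * Qform b θ (fun x => max (q x) 0) m p f + C * pNorm m p f

/-! A minimiser `τ₀` of the `2`-energy over unimodular `τ` exists by compactness of the torus;
rescaled to unit norm, `τ₀ / √m(W)` has energy `ι_{2,θ}(W)/m(W)`, which bounds the bottom of the
spectrum. Since `‖τ x - e^{iθ} τ y‖ ≤ 2` for unimodular `τ`, the `2`-energy of a minimiser of the
`1`-energy is at most twice its `1`-energy, whence `ι_{2,θ}(W) ≤ 2 ι_{1,θ}(W)`. -/

def magEnergy (b θ : X → X → ℝ) (p : ℝ) (W : Finset X) (f : X → ℂ) : ℝ :=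
  (1 / 2) * ∑ x ∈ W, ∑ y ∈ W,
    b x y * ‖f x - Complex.exp ((θ x y : ℂ) * Complex.I) * f y‖ ^ p

section magEnergy

variable {b θ : X → X → ℝ} {p : ℝ} {W : Finset X}

lemma magEnergy_nonneg (hb : ∀ x y, 0 ≤ b x y) (f : X → ℂ) : 0 ≤ magEnergy b θ p W f := by
  unfold magEnergy
  refine mul_nonneg (by norm_num) (Finset.sum_nonneg fun x _ => Finset.sum_nonneg fun y _ => ?_)
  exact mul_nonneg (hb x y) (Real.rpow_nonneg (norm_nonneg _) p)

lemma magEnergy_congr {f g : X → ℂ} (h : ∀ x ∈ W, f x = g x) :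
    magEnergy b θ p W f = magEnergy b θ p W g := by
  unfold magEnergy
  congr 1
  refine Finset.sum_congr rfl fun x hx => Finset.sum_congr rfl fun y hy => ?_
  rw [h x hx, h y hy]

lemma magEnergy_const_mul (c : ℂ) (f : X → ℂ) :
    magEnergy b θ p W (fun x => c * f x) = ‖c‖ ^ p * magEnergy b θ p W f := by
  unfold magEnergy
  rw [mul_left_comm]
  congr 1
  rw [Finset.mul_sum]
  refine Finset.sum_congr rfl fun x _ => ?_
  rw [Finset.mul_sum]
  refine Finset.sum_congr rfl fun y _ => ?_
  rw [show c * f x - Complex.exp ((θ x y : ℂ) * Complex.I) * (c * f y)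
      = c * (f x - Complex.exp ((θ x y : ℂ) * Complex.I) * f y) by ring,
    norm_mul, Real.mul_rpow (norm_nonneg _) (norm_nonneg _)]
  ring

lemma continuous_magEnergy (hp : 0 ≤ p) : Continuous (magEnergy b θ p W) := by
  unfold magEnergy
  fun_prop (disch := exact fun _ => Or.inr hp)

lemma magEnergy_two_le_of_unimodular (hb : ∀ x y, 0 ≤ b x y) {τ : X → ℂ}
    (hτ : ∀ x ∈ W, ‖τ x‖ = 1) : magEnergy b θ 2 W τ ≤ 2 * magEnergy b θ 1 W τ := by
  unfold magEnergy
  rw [mul_left_comm]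
  gcongr (1 / 2) * ?_
  rw [Finset.mul_sum]
  refine Finset.sum_le_sum fun x hx => ?_
  rw [Finset.mul_sum]
  refine Finset.sum_le_sum fun y hy => ?_
  set d := ‖τ x - Complex.exp ((θ x y : ℂ) * Complex.I) * τ y‖
  have hd : d ≤ 2 := by
    calc d ≤ ‖τ x‖ + ‖Complex.exp ((θ x y : ℂ) * Complex.I) * τ y‖ := norm_sub_le _ _
      _ = 2 := by rw [norm_mul, Complex.norm_exp_ofReal_mul_I, hτ x hx, hτ y hy]; norm_num
  rw [Real.rpow_two, Real.rpow_one, sq]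
  nlinarith [mul_le_mul_of_nonneg_left hd (mul_nonneg (hb x y) (norm_nonneg _ : 0 ≤ d))]

end magEnergy

section frust

variable {b θ : X → X → ℝ} {p : ℝ} {W : Finset X}

lemma frust_le_magEnergy (hb : ∀ x y, 0 ≤ b x y) {τ : X → ℂ} (hτ : ∀ x ∈ W, ‖τ x‖ = 1) :
    frust b θ p W ≤ magEnergy b θ p W τ :=
  csInf_le ⟨0, by rintro _ ⟨σ, -, rfl⟩; exact magEnergy_nonneg hb σ⟩ ⟨τ, hτ, rfl⟩

lemma frust_eq_magEnergy_of_isMin {τ₀ : X → ℂ} (h₀ : ∀ x ∈ W, ‖τ₀ x‖ = 1)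
    (hmin : ∀ τ : X → ℂ, (∀ x ∈ W, ‖τ x‖ = 1) → magEnergy b θ p W τ₀ ≤ magEnergy b θ p W τ) :
    frust b θ p W = magEnergy b θ p W τ₀ :=
  IsLeast.csInf_eq ⟨⟨τ₀, h₀, rfl⟩, by rintro _ ⟨τ, hτ, rfl⟩; exact hmin τ hτ⟩

lemma exists_frust_eq_magEnergy (hp : 0 ≤ p) :
    ∃ τ₀ : X → ℂ, (∀ x ∈ W, ‖τ₀ x‖ = 1) ∧ frust b θ p W = magEnergy b θ p W τ₀ := by
  let torus : Set (X → ℂ) := Set.univ.pi fun _ => Metric.sphere 0 1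
  have htorus : IsCompact torus := isCompact_univ_pi fun _ => isCompact_sphere 0 1
  obtain ⟨τ₀, hτ₀, hmin⟩ := htorus.exists_isMinOn (f := magEnergy b θ p W)
    ⟨fun _ => 1, by simp [torus]⟩ (continuous_magEnergy hp).continuousOn
  have h₀ : ∀ x ∈ W, ‖τ₀ x‖ = 1 := fun x _ => by simpa using hτ₀ x (Set.mem_univ x)
  refine ⟨τ₀, h₀, frust_eq_magEnergy_of_isMin h₀ fun τ hτ => ?_⟩
  let τ' : X → ℂ := fun x => if x ∈ W then τ x else 1
  have hτ' : τ' ∈ torus := fun x _ => by by_cases hx : x ∈ W <;> simp [τ', hx, hτ]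
  rw [magEnergy_congr (f := τ) (g := τ') fun x hx => by simp [τ', hx]]
  exact hmin hτ'

lemma frust_two_le_two_mul_frust_one (hb : ∀ x y, 0 ≤ b x y) :
    frust b θ 2 W ≤ 2 * frust b θ 1 W := by
  obtain ⟨τ₁, hτ₁, hfrust⟩ := exists_frust_eq_magEnergy (b := b) (θ := θ) (W := W) zero_le_one
  rw [hfrust]
  exact (frust_le_magEnergy hb hτ₁).trans (magEnergy_two_le_of_unimodular hb hτ₁)

lemma exists_normalized_magEnergy_eq_frust_div (m : X → ℝ) (hM : 0 < ∑ x ∈ W, m x) :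
    ∃ f : X → ℂ, ∑ x ∈ W, ‖f x‖ ^ (2 : ℝ) * m x = 1 ∧
      magEnergy b θ 2 W f = frust b θ 2 W / ∑ x ∈ W, m x := by
  obtain ⟨τ₀, hτ₀, hfrust⟩ := exists_frust_eq_magEnergy (b := b) (θ := θ) (W := W) zero_le_two
  set M := ∑ x ∈ W, m x
  set c : ℂ := (((√M)⁻¹ : ℝ) : ℂ)
  have hc : ‖c‖ ^ (2 : ℝ) = M⁻¹ := by
    rw [Complex.norm_real, Real.norm_eq_abs, Real.rpow_two, sq_abs, inv_pow,
      Real.sq_sqrt hM.le]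
  refine ⟨fun x => c * τ₀ x, ?_, ?_⟩
  · calc ∑ x ∈ W, ‖c * τ₀ x‖ ^ (2 : ℝ) * m x = ∑ x ∈ W, M⁻¹ * m x :=
          Finset.sum_congr rfl fun x hx => by
            rw [norm_mul, hτ₀ x hx, mul_one, hc]
      _ = 1 := by rw [← Finset.mul_sum, inv_mul_cancel₀ hM.ne']
  · rw [magEnergy_const_mul, hc, hfrust, inv_mul_eq_div]

end frust

theorem bottom_spectrum_le_frust_general
    (b θ : X → X → ℝ) (m : X → ℝ) (hG : IsMagneticGraph b θ m)
    (W : Finset X) (hW : W.Nonempty)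
    (lam : ℝ)
    (hlam : lam = sInf {r : ℝ | ∃ f : X → ℂ,
      (∑ x ∈ W, ‖f x‖ ^ (2 : ℝ) * m x) = 1 ∧
      r = (1 / 2) * ∑ x ∈ W, ∑ y ∈ W,
        b x y * ‖f x - Complex.exp ((θ x y : ℂ) * Complex.I) * f y‖ ^ (2 : ℝ)}) :
    (∃ f : X → ℂ, (∑ x ∈ W, ‖f x‖ ^ (2 : ℝ) * m x) = 1 ∧
      (1 / 2) * ∑ x ∈ W, ∑ y ∈ W,
          b x y * ‖f x - Complex.exp ((θ x y : ℂ) * Complex.I) * f y‖ ^ (2 : ℝ) ≤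
        frust b θ 2 W / (∑ x ∈ W, m x)) ∧
    0 ≤ lam ∧
    lam ≤ frust b θ 2 W / (∑ x ∈ W, m x) ∧
    frust b θ 2 W / (∑ x ∈ W, m x) ≤ 2 * frust b θ 1 W / (∑ x ∈ W, m x) := by
  obtain ⟨hb, -, -, -, -, hm⟩ := hG
  have hM : 0 < ∑ x ∈ W, m x := Finset.sum_pos (fun x _ => hm x) hW
  obtain ⟨f, hf, hEf⟩ := exists_normalized_magEnergy_eq_frust_div (b := b) (θ := θ) m hM
  have hlower : ∀ r ∈ {r : ℝ | ∃ f : X → ℂ, (∑ x ∈ W, ‖f x‖ ^ (2 : ℝ) * m x) = 1 ∧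
      r = magEnergy b θ 2 W f}, 0 ≤ r := by
    rintro _ ⟨g, -, rfl⟩
    exact magEnergy_nonneg hb g
  refine ⟨⟨f, hf, hEf.le⟩, hlam ▸ Real.sInf_nonneg hlower, ?_, ?_⟩
  · rw [hlam]
    exact csInf_le ⟨0, hlower⟩ ⟨f, hf, hEf.symm⟩
  · exact div_le_div_of_nonneg_right (frust_two_le_two_mul_frust_one hb) hM.le

/-- for `q = 0` and finite nonempty `W` there is `f` with
`Σ_{x∈W}|f(x)|²m(x) = 1` whose energy is at most `ι_{2,θ}(W)/m(W)`; consequently the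
bottom of the spectrum of `H_{θ,W}` (the infimum of the Rayleigh quotients) satisfies
`0 ≤ min σ(H_{θ,W}) ≤ ι_{2,θ}(W)/m(W) ≤ 2ι_{1,θ}(W)/m(W)`. -/
theorem bottom_spectrum_le_frust [Countable X]
    (b θ : X → X → ℝ) (m : X → ℝ) (hG : IsMagneticGraph b θ m)
    (W : Finset X) (hW : W.Nonempty)
    (lam : ℝ)
    (hlam : lam = sInf {r : ℝ | ∃ f : X → ℂ,
      (∑ x ∈ W, ‖f x‖ ^ (2 : ℝ) * m x) = 1 ∧
      r = (1 / 2) * ∑ x ∈ W, ∑ y ∈ W,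
        b x y * ‖f x - Complex.exp ((θ x y : ℂ) * Complex.I) * f y‖ ^ (2 : ℝ)}) :
    (∃ f : X → ℂ, (∑ x ∈ W, ‖f x‖ ^ (2 : ℝ) * m x) = 1 ∧
      (1 / 2) * ∑ x ∈ W, ∑ y ∈ W,
          b x y * ‖f x - Complex.exp ((θ x y : ℂ) * Complex.I) * f y‖ ^ (2 : ℝ) ≤
        frust b θ 2 W / (∑ x ∈ W, m x)) ∧
    0 ≤ lam ∧
    lam ≤ frust b θ 2 W / (∑ x ∈ W, m x) ∧
    frust b θ 2 W / (∑ x ∈ W, m x) ≤ 2 * frust b θ 1 W / (∑ x ∈ W, m x) :=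
  bottom_spectrum_le_frust_general b θ m hG W hW lam hlam
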